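/- Let P be the Example 2 Uniform Selection transition matrix on the nonnegative integers, let a ≥ 2 be an integer, and let (X_n) be a Markov chain with transitions P started at 4a. Then the probability that the chain ever reaches the state 4, namely ℙ(∃ n, X_n = 4), equals (8/9)^{a-1}, which is strictly less than 1. -/

import Mathlib

open MeasureTheory Classical

/-- The Example 2 Uniform Selection transition matrix on the nonnegative integers:
`P 0 1 = 1`; for `a ≥ 1`, `P (4a) (4a±1) = 1/2`; for `x ≡ 1, 2 (mod 4)`,
`P x (x-1) = 1/4` and `P x (x+1) = 3/4`; for `x ≡ 3 (mod 4)`,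
`P x (x-1) = 8/9` and `P x (x+1) = 1/9`; all other entries 0. -/
noncomputable def uniformSelP (x y : ℕ) : ℝ :=
  if x = 0 then (if y = 1 then 1 else 0)
  else if x % 4 = 0 then (if y = x - 1 ∨ y = x + 1 then 1 / 2 else 0)
  else if x % 4 = 3 then (if y = x - 1 then 8 / 9 else if y = x + 1 then 1 / 9 else 0)
  else (if y = x - 1 then 1 / 4 else if y = x + 1 then 3 / 4 else 0)

/-- `(X n)` is a Markov chain with transition matrix `P` started at `x₀`:
the probability of each finite path is the product of transition probabilities. -/
def IsMarkovChainFrom {Ω : Type*} [MeasurableSpace Ω] (Pr : Measure Ω)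
    (P : ℕ → ℕ → ℝ) (x₀ : ℕ) (X : ℕ → Ω → ℕ) : Prop :=
  ∀ (n : ℕ) (p : ℕ → ℕ),
    (Pr {ω | ∀ i ≤ n, X i ω = p i}).toReal
      = (if p 0 = x₀ then (1 : ℝ) else 0) * ∏ i ∈ Finset.range n, P (p i) (p (i + 1))


open ENNReal

lemma usP_nonneg (x y : ℕ) : 0 ≤ uniformSelP x y := by
  unfold uniformSelP; split_ifs <;> norm_num

lemma usP_row (x : ℕ) : uniformSelP x (x - 1) + uniformSelP x (x + 1) = 1 := by
  unfold uniformSelP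
  rcases Nat.eq_zero_or_pos x with h0 | h0
  · subst h0; norm_num
  · have hne : x - 1 ≠ x + 1 := by omega
    have h1 : ¬ (x + 1 = x - 1) := by omega
    split_ifs with h h2 h3 h4 h5 h6 h7 <;> simp_all <;> norm_num

lemma usP_ne_zero {x y : ℕ} (h : uniformSelP x y ≠ 0) : y = x - 1 ∨ y = x + 1 := by
  unfold uniformSelP at h
  split_ifs at h <;> simp_all

lemma usP_le_one (x y : ℕ) : uniformSelP x y ≤ 1 := by
  unfold uniformSelP; split_ifs <;> norm_num

-- transition values
lemma usP0d {x : ℕ} (h0 : x ≠ 0) (h : x % 4 = 0) : uniformSelP x (x - 1) = 1/2 := by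
  simp [uniformSelP, h0, h]
lemma usP0u {x : ℕ} (h0 : x ≠ 0) (h : x % 4 = 0) : uniformSelP x (x + 1) = 1/2 := by
  simp [uniformSelP, h0, h]
lemma usP3d {x : ℕ} (h : x % 4 = 3) : uniformSelP x (x - 1) = 8/9 := by
  have h0 : x ≠ 0 := by omega
  have : x % 4 ≠ 0 := by omega
  simp [uniformSelP, h0, h, this]
lemma usP3u {x : ℕ} (h : x % 4 = 3) : uniformSelP x (x + 1) = 1/9 := by
  have h0 : x ≠ 0 := by omega
  have h1 : x % 4 ≠ 0 := by omega
  have h2 : ¬ (x + 1 = x - 1) := by omega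
  simp [uniformSelP, h0, h, h1, h2]
lemma usP12d {x : ℕ} (h : x % 4 = 1 ∨ x % 4 = 2) : uniformSelP x (x - 1) = 1/4 := by
  have h0 : x ≠ 0 := by omega
  have h1 : x % 4 ≠ 0 := by omega
  have h3 : x % 4 ≠ 3 := by omega
  simp [uniformSelP, h0, h1, h3]
lemma usP12u {x : ℕ} (h : x % 4 = 1 ∨ x % 4 = 2) : uniformSelP x (x + 1) = 3/4 := by
  have h0 : x ≠ 0 := by omega
  have h1 : x % 4 ≠ 0 := by omega
  have h3 : x % 4 ≠ 3 := by omega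
  have h2 : ¬ (x + 1 = x - 1) := by omega
  simp [uniformSelP, h0, h1, h3, h2]

/-- interpolation values of the harmonic function inside a block -/
noncomputable def usD : ℕ → ℝ := fun i =>
  if i = 0 then 1 else if i = 1 then 20/21 else if i = 2 then 59/63 else 176/189

/-- the bounded harmonic function off `4`, equal to the hitting probability of 4 -/
noncomputable def usC : ℕ → ℝ := fun x =>
  if x ≤ 4 then 1 else (8/9 : ℝ) ^ (x / 4 - 1) * usD (x % 4)

lemma usD_nonneg (i : ℕ) : 0 ≤ usD i := by unfold usD; split_ifs <;> norm_num
lemma usD_le_one (i : ℕ) : usD i ≤ 1 := by unfold usD; split_ifs <;> norm_num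

lemma usC_nonneg (x : ℕ) : 0 ≤ usC x := by
  unfold usC; split_ifs with h
  · norm_num
  · exact mul_nonneg (by positivity) (usD_nonneg _)

lemma usC_le_one (x : ℕ) : usC x ≤ 1 := by
  unfold usC; split_ifs with h
  · norm_num
  · calc (8/9:ℝ)^(x/4-1) * usD (x%4) ≤ 1 * 1 :=
        mul_le_mul (pow_le_one₀ (by norm_num) (by norm_num)) (usD_le_one _) (usD_nonneg _) one_pos.le
      _ = 1 := one_mul 1

lemma usC_four : usC 4 = 1 := by norm_num [usC]

lemma usC_mul4 {b : ℕ} (hb : 1 ≤ b) : usC (4 * b) = (8/9:ℝ) ^ (b - 1) := by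
  unfold usC
  rcases eq_or_lt_of_le hb with h | h
  · simp [← h, usD]
  · have h4 : ¬ (4 * b ≤ 4) := by omega
    have : (4 * b) / 4 = b := by omega
    have hm : (4 * b) % 4 = 0 := by omega
    simp [h4, this, hm, usD]

lemma usC_b1 {b : ℕ} (hb : 1 ≤ b) : usC (4 * b + 1) = (8/9:ℝ) ^ (b - 1) * (20/21) := by
  unfold usC
  have h4 : ¬ (4 * b + 1 ≤ 4) := by omega
  have hd : (4 * b + 1) / 4 = b := by omega
  have hm : (4 * b + 1) % 4 = 1 := by omega
  simp [h4, hd, hm, usD]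

lemma usC_b2 {b : ℕ} (hb : 1 ≤ b) : usC (4 * b + 2) = (8/9:ℝ) ^ (b - 1) * (59/63) := by
  unfold usC
  have h4 : ¬ (4 * b + 2 ≤ 4) := by omega
  have hd : (4 * b + 2) / 4 = b := by omega
  have hm : (4 * b + 2) % 4 = 2 := by omega
  simp [h4, hd, hm, usD]

lemma usC_b3 {b : ℕ} (hb : 1 ≤ b) : usC (4 * b + 3) = (8/9:ℝ) ^ (b - 1) * (176/189) := by
  unfold usC
  have h4 : ¬ (4 * b + 3 ≤ 4) := by omega
  have hd : (4 * b + 3) / 4 = b := by omega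
  have hm : (4 * b + 3) % 4 = 3 := by omega
  simp [h4, hd, hm, usD]

lemma usC_harmonic {x : ℕ} (hx : x ≠ 4) :
    usC x = uniformSelP x (x - 1) * usC (x - 1) + uniformSelP x (x + 1) * usC (x + 1) := by
  rcases lt_or_ge x 5 with h5 | h5
  · -- x ∈ {0,1,2,3}
    interval_cases x
    · norm_num [uniformSelP, usC]
    · norm_num [uniformSelP, usC]
    · norm_num [uniformSelP, usC]
    · norm_num [uniformSelP, usC]
    · omega
  · have hb : 1 ≤ x / 4 := by omega
    set b := x / 4 with hbdef
    have hx4 : x % 4 = 0 ∨ x % 4 = 1 ∨ x % 4 = 2 ∨ x % 4 = 3 := by omega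
    have hxe : x = 4 * b + x % 4 := by omega
    rcases hx4 with h | h | h | h
    · -- x = 4b, b ≥ 2
      have hb2 : 2 ≤ b := by omega
      have hxeq : x = 4 * b := by omega
      have hd : x - 1 = 4 * (b - 1) + 3 := by omega
      have hu : x + 1 = 4 * b + 1 := by omega
      rw [usP0d (by omega) h, usP0u (by omega) h, hd, hu, hxeq,
        usC_mul4 (by omega), usC_b3 (by omega), usC_b1 (by omega)]
      have hbb : b - 1 - 1 = b - 2 := by omega
      have hb1 : b - 1 = (b - 2) + 1 := by omega
      rw [hbb, hb1, pow_succ]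
      ring
    · have hxeq : x = 4 * b + 1 := by omega
      have hd : x - 1 = 4 * b := by omega
      have hu : x + 1 = 4 * b + 2 := by omega
      rw [usP12d (by omega), usP12u (by omega), hd, hu, hxeq,
        usC_b1 hb, usC_mul4 hb, usC_b2 hb]
      ring
    · have hxeq : x = 4 * b + 2 := by omega
      have hd : x - 1 = 4 * b + 1 := by omega
      have hu : x + 1 = 4 * b + 3 := by omega
      rw [usP12d (by omega), usP12u (by omega), hd, hu, hxeq,
        usC_b2 hb, usC_b1 hb, usC_b3 hb]
      ring
    · have hxeq : x = 4 * b + 3 := by omega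
      have hd : x - 1 = 4 * b + 2 := by omega
      have hu : x + 1 = 4 * (b + 1) := by omega
      rw [usP3d (by omega), usP3u (by omega), hd, hu, hxeq,
        usC_b3 hb, usC_b2 hb, usC_mul4 (by omega)]
      have : b + 1 - 1 = (b - 1) + 1 := by omega
      rw [this, pow_succ]
      ring

/-- probability of hitting 4 within N steps starting from x -/
noncomputable def usF : ℕ → ℕ → ℝ
  | 0, x => if x = 4 then 1 else 0
  | (N+1), x => if x = 4 then 1 else
      uniformSelP x (x - 1) * usF N (x - 1) + uniformSelP x (x + 1) * usF N (x + 1)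

lemma usF_nonneg (N x : ℕ) : 0 ≤ usF N x := by
  induction N generalizing x with
  | zero => unfold usF; split_ifs <;> norm_num
  | succ N ih =>
    unfold usF; split_ifs
    · norm_num
    · exact add_nonneg (mul_nonneg (usP_nonneg _ _) (ih _)) (mul_nonneg (usP_nonneg _ _) (ih _))

lemma usF_four (N : ℕ) : usF N 4 = 1 := by cases N <;> simp [usF]

lemma usF_le_one (N x : ℕ) : usF N x ≤ 1 := by
  induction N generalizing x with
  | zero => unfold usF; split_ifs <;> norm_num
  | succ N ih =>
    unfold usF; split_ifs
    · exact le_rfl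
    · calc uniformSelP x (x-1) * usF N (x-1) + uniformSelP x (x+1) * usF N (x+1)
          ≤ uniformSelP x (x-1) * 1 + uniformSelP x (x+1) * 1 :=
            add_le_add (mul_le_mul_of_nonneg_left (ih _) (usP_nonneg _ _))
              (mul_le_mul_of_nonneg_left (ih _) (usP_nonneg _ _))
        _ = 1 := by rw [mul_one, mul_one, usP_row]

lemma usF_le_usC (N x : ℕ) : usF N x ≤ usC x := by
  induction N generalizing x with
  | zero =>
    unfold usF; split_ifs with h
    · subst h; rw [usC_four]
    · exact usC_nonneg x
  | succ N ih =>
    unfold usF; split_ifs with h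
    · subst h; rw [usC_four]
    · rw [usC_harmonic h]
      exact add_le_add (mul_le_mul_of_nonneg_left (ih _) (usP_nonneg _ _))
        (mul_le_mul_of_nonneg_left (ih _) (usP_nonneg _ _))

/-- survival probability inside the box `[0, 4M) \ {4}` for N steps -/
noncomputable def usW (M : ℕ) : ℕ → ℕ → ℝ
  | 0, x => if x = 4 ∨ 4 * M ≤ x then 0 else 1
  | (N+1), x => if x = 4 ∨ 4 * M ≤ x then 0 else
      uniformSelP x (x - 1) * usW M N (x - 1) + uniformSelP x (x + 1) * usW M N (x + 1)

lemma usW_dead {M N x : ℕ} (h : x = 4 ∨ 4 * M ≤ x) : usW M N x = 0 := by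
  cases N <;> simp [usW, h]

lemma usW_nonneg (M N x : ℕ) : 0 ≤ usW M N x := by
  induction N generalizing x with
  | zero => unfold usW; split_ifs <;> norm_num
  | succ N ih =>
    unfold usW; split_ifs
    · norm_num
    · exact add_nonneg (mul_nonneg (usP_nonneg _ _) (ih _)) (mul_nonneg (usP_nonneg _ _) (ih _))

lemma usW_le_one (M N x : ℕ) : usW M N x ≤ 1 := by
  induction N generalizing x with
  | zero => unfold usW; split_ifs <;> norm_num
  | succ N ih =>
    unfold usW; split_ifs
    · norm_num
    · calc uniformSelP x (x-1) * usW M N (x-1) + uniformSelP x (x+1) * usW M N (x+1)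
          ≤ uniformSelP x (x-1) * 1 + uniformSelP x (x+1) * 1 := by
            exact add_le_add (mul_le_mul_of_nonneg_left (ih _) (usP_nonneg _ _))
              (mul_le_mul_of_nonneg_left (ih _) (usP_nonneg _ _))
        _ = 1 := by rw [mul_one, mul_one, usP_row]

lemma usP_up_low {x : ℕ} (h : x < 4) : (1/9:ℝ) ≤ uniformSelP x (x + 1) := by
  interval_cases x <;> norm_num [uniformSelP]

lemma usP_down_low {x : ℕ} (h : 5 ≤ x) : (1/9:ℝ) ≤ uniformSelP x (x - 1) := by
  have h4 : x % 4 = 0 ∨ x % 4 = 1 ∨ x % 4 = 2 ∨ x % 4 = 3 := by omega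
  rcases h4 with h0 | h0 | h0 | h0
  · rw [usP0d (by omega) h0]; norm_num
  · rw [usP12d (Or.inl h0)]; norm_num
  · rw [usP12d (Or.inr h0)]; norm_num
  · rw [usP3d h0]; norm_num

lemma usW_decay1 (M : ℕ) (hM : 2 ≤ M) :
    ∀ N x, x < 4*M → (if x ≤ 4 then 4 - x else x - 4) ≤ N → usW M N x ≤ 1 - (1/9:ℝ)^N := by
  intro N
  induction N with
  | zero =>
    intro x hx hd
    have hx4 : x = 4 := by split_ifs at hd <;> omega
    rw [usW_dead (Or.inl hx4)]; norm_num
  | succ N ih =>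
    intro x hx hd
    by_cases h4 : x = 4
    · rw [usW_dead (Or.inl h4)]
      have : (1/9:ℝ)^(N+1) ≤ 1 := pow_le_one₀ (by norm_num) (by norm_num)
      linarith
    · have halive : ¬ (x = 4 ∨ 4*M ≤ x) := by
        push_neg; exact ⟨h4, by omega⟩
      have hunf : usW M (N+1) x
          = uniformSelP x (x-1) * usW M N (x-1) + uniformSelP x (x+1) * usW M N (x+1) := by
        simp only [usW]; rw [if_neg halive]
      rw [hunf]
      have hPd := usP_nonneg x (x-1)
      have hPu := usP_nonneg x (x+1)
      have hrow := usP_row x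
      have ht : (0:ℝ) ≤ (1/9)^N := by positivity
      have e : (1/9:ℝ)^(N+1) = (1/9) * (1/9)^N := by rw [pow_succ]; ring
      rcases lt_or_ge x 4 with hlt | hge
      · have hd1 : (if x+1 ≤ 4 then 4-(x+1) else x+1-4) ≤ N := by
          split_ifs at hd ⊢ <;> omega
        have hB := ih (x+1) (by omega) hd1
        have hA := usW_le_one M N (x-1)
        have hp := usP_up_low hlt
        nlinarith [mul_le_mul_of_nonneg_left hA hPd, mul_le_mul_of_nonneg_left hB hPu,
          mul_le_mul_of_nonneg_right hp ht]
      · have hge5 : 5 ≤ x := by omega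
        have hd1 : (if x-1 ≤ 4 then 4-(x-1) else x-1-4) ≤ N := by
          split_ifs at hd ⊢ <;> omega
        have hB := ih (x-1) (by omega) hd1
        have hA := usW_le_one M N (x+1)
        have hp := usP_down_low hge5
        nlinarith [mul_le_mul_of_nonneg_left hA hPu, mul_le_mul_of_nonneg_left hB hPd,
          mul_le_mul_of_nonneg_right hp ht]

lemma usW_submul (M K : ℕ) {s : ℝ} (hs0 : 0 ≤ s) (hs : ∀ y, usW M K y ≤ s) :
    ∀ N x, usW M (K + N) x ≤ s * usW M N x := by
  intro N
  induction N with
  | zero =>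
    intro x
    by_cases hd : x = 4 ∨ 4*M ≤ x
    · rw [Nat.add_zero, usW_dead hd, usW_dead hd, mul_zero]
    · have h1 : usW M 0 x = 1 := by simp only [usW]; rw [if_neg hd]
      rw [Nat.add_zero, h1, mul_one]; exact hs x
  | succ N ih =>
    intro x
    by_cases hd : x = 4 ∨ 4*M ≤ x
    · rw [usW_dead hd, usW_dead hd, mul_zero]
    · rw [Nat.add_succ]
      have hu1 : usW M (K+N+1) x
          = uniformSelP x (x-1) * usW M (K+N) (x-1) + uniformSelP x (x+1) * usW M (K+N) (x+1) := by
        simp only [usW]; rw [if_neg hd]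
      have hu2 : usW M (N+1) x
          = uniformSelP x (x-1) * usW M N (x-1) + uniformSelP x (x+1) * usW M N (x+1) := by
        simp only [usW]; rw [if_neg hd]
      rw [hu1, hu2]
      have hPd := usP_nonneg x (x-1)
      have hPu := usP_nonneg x (x+1)
      calc uniformSelP x (x-1) * usW M (K+N) (x-1) + uniformSelP x (x+1) * usW M (K+N) (x+1)
          ≤ uniformSelP x (x-1) * (s * usW M N (x-1)) + uniformSelP x (x+1) * (s * usW M N (x+1)) :=
            add_le_add (mul_le_mul_of_nonneg_left (ih _) hPd)
              (mul_le_mul_of_nonneg_left (ih _) hPu)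
        _ = s * (uniformSelP x (x-1) * usW M N (x-1) + uniformSelP x (x+1) * usW M N (x+1)) := by
            ring

lemma usW_iter (M : ℕ) (hM : 2 ≤ M) :
    ∀ k x, usW M (k * (4*M)) x ≤ (1 - (1/9:ℝ)^(4*M))^k := by
  have hq1 : (1/9:ℝ)^(4*M) ≤ 1 := pow_le_one₀ (by norm_num) (by norm_num)
  have hs0 : (0:ℝ) ≤ 1 - (1/9:ℝ)^(4*M) := by linarith
  have hs : ∀ y, usW M (4*M) y ≤ 1 - (1/9:ℝ)^(4*M) := by
    intro y
    by_cases hd : y = 4 ∨ 4*M ≤ y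
    · rw [usW_dead hd]; linarith
    · push_neg at hd
      exact usW_decay1 M hM (4*M) y (by omega) (by split_ifs <;> omega)
  intro k
  induction k with
  | zero => intro x; simpa using usW_le_one M 0 x
  | succ k ih =>
    intro x
    have he : (k+1) * (4*M) = 4*M + k * (4*M) := by ring
    rw [he]
    calc usW M (4*M + k*(4*M)) x ≤ (1 - (1/9:ℝ)^(4*M)) * usW M (k*(4*M)) x :=
          usW_submul M (4*M) hs0 hs _ x
      _ ≤ (1 - (1/9:ℝ)^(4*M)) * (1 - (1/9:ℝ)^(4*M))^k :=
          mul_le_mul_of_nonneg_left (ih x) hs0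
      _ = (1 - (1/9:ℝ)^(4*M))^(k+1) := by rw [pow_succ]; ring

lemma usC_big {M x : ℕ} (hM : 2 ≤ M) (hd : 4*M ≤ x) : usC x ≤ (8/9:ℝ)^(M-1) := by
  unfold usC
  rw [if_neg (by omega)]
  calc (8/9:ℝ)^(x/4-1) * usD (x % 4) ≤ (8/9:ℝ)^(M-1) * 1 :=
        mul_le_mul (pow_le_pow_of_le_one (by norm_num) (by norm_num) (by omega))
          (usD_le_one _) (usD_nonneg _) (by positivity)
    _ = (8/9:ℝ)^(M-1) := mul_one _

lemma usC_le_FWR (M : ℕ) (hM : 2 ≤ M) :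
    ∀ N x, usC x ≤ usF N x + usW M N x + (8/9:ℝ)^(M-1) := by
  have hR : (0:ℝ) ≤ (8/9)^(M-1) := by positivity
  intro N
  induction N with
  | zero =>
    intro x
    by_cases h4 : x = 4
    · subst h4
      rw [usC_four, usF_four]
      linarith [usW_nonneg M 0 4]
    · by_cases hd : 4*M ≤ x
      · linarith [usC_big hM hd, usF_nonneg 0 x, usW_nonneg M 0 x]
      · have h1 : usW M 0 x = 1 := by
          simp only [usW]; rw [if_neg (by push_neg; exact ⟨h4, by omega⟩)]
        rw [h1]
        linarith [usC_le_one x, usF_nonneg 0 x]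
  | succ N ih =>
    intro x
    by_cases h4 : x = 4
    · subst h4
      rw [usC_four, usF_four]
      linarith [usW_nonneg M (N+1) 4]
    · by_cases hd : 4*M ≤ x
      · linarith [usC_big hM hd, usF_nonneg (N+1) x, usW_nonneg M (N+1) x]
      · have halive : ¬ (x = 4 ∨ 4*M ≤ x) := by push_neg; exact ⟨h4, by omega⟩
        have hFu : usF (N+1) x
            = uniformSelP x (x-1) * usF N (x-1) + uniformSelP x (x+1) * usF N (x+1) := by
          simp only [usF]; rw [if_neg h4]
        have hWu : usW M (N+1) x
            = uniformSelP x (x-1) * usW M N (x-1) + uniformSelP x (x+1) * usW M N (x+1) := by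
          simp only [usW]; rw [if_neg halive]
        rw [hFu, hWu, usC_harmonic h4]
        have hPd := usP_nonneg x (x-1)
        have hPu := usP_nonneg x (x+1)
        have hrow := usP_row x
        nlinarith [mul_le_mul_of_nonneg_left (ih (x-1)) hPd,
          mul_le_mul_of_nonneg_left (ih (x+1)) hPu]

lemma usF_iSup {a : ℕ} (ha : 2 ≤ a) : (⨆ N, usF N (4*a)) = (8/9:ℝ)^(a-1) := by
  have hbdd : BddAbove (Set.range fun N => usF N (4*a)) := by
    refine ⟨1, ?_⟩
    rintro _ ⟨N, rfl⟩
    exact usF_le_one N (4*a)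
  have hC4a : usC (4*a) = (8/9:ℝ)^(a-1) := usC_mul4 (by omega)
  apply le_antisymm
  · apply ciSup_le
    intro N
    rw [← hC4a]
    exact usF_le_usC N (4*a)
  · apply _root_.le_of_forall_pos_le_add
    intro ε hε
    -- choose M with (8/9)^(M-1) < ε/2
    obtain ⟨m, hm⟩ := exists_pow_lt_of_lt_one (half_pos hε) (by norm_num : (8/9:ℝ) < 1)
    set M := m + 2 with hMdef
    have hM2 : 2 ≤ M := by omega
    have hRM : (8/9:ℝ)^(M-1) < ε/2 := by
      calc (8/9:ℝ)^(M-1) ≤ (8/9:ℝ)^m :=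
            pow_le_pow_of_le_one (by norm_num) (by norm_num) (by omega)
        _ < ε/2 := hm
    -- choose k with s^k < ε/2
    have hq1 : (1/9:ℝ)^(4*M) ≤ 1 := pow_le_one₀ (by norm_num) (by norm_num)
    have hq0 : (0:ℝ) < (1/9:ℝ)^(4*M) := by positivity
    have hslt : 1 - (1/9:ℝ)^(4*M) < 1 := by linarith
    obtain ⟨k, hk⟩ := exists_pow_lt_of_lt_one (half_pos hε) hslt
    have hW := usW_iter M hM2 k (4*a)
    have hkey := usC_le_FWR M hM2 (k * (4*M)) (4*a)
    have hF : usF (k*(4*M)) (4*a) ≤ ⨆ N, usF N (4*a) := le_ciSup hbdd (k*(4*M))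
    rw [hC4a] at hkey
    linarith

lemma usF_lt_one_pow {a : ℕ} (ha : 2 ≤ a) : (8/9:ℝ)^(a-1) < 1 :=
  pow_lt_one₀ (by norm_num) (by norm_num) (by omega)

/-- weight of a path (product of transition probabilities along it) -/
noncomputable def usWt : List ℕ → ℝ
  | x :: y :: t => uniformSelP x y * usWt (y :: t)
  | _ => 1

lemma usWt_nonneg (l : List ℕ) : 0 ≤ usWt l := by
  match l with
  | [] => exact zero_le_one
  | [x] => exact zero_le_one
  | x :: y :: t =>
    exact mul_nonneg (usP_nonneg _ _) (usWt_nonneg (y :: t))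

/-- the finite set of paths of length `N+1` (with allowed supports) starting at `x` -/
noncomputable def usPaths : ℕ → ℕ → Finset (List ℕ)
  | x, 0 => {[x]}
  | x, (N+1) => ((usPaths (x-1) N).image (List.cons x)) ∪ ((usPaths (x+1) N).image (List.cons x))

lemma usPaths_shape : ∀ N x l, l ∈ usPaths x N → ∃ t, l = x :: t ∧ l.length = N + 1 := by
  intro N
  induction N with
  | zero =>
    intro x l hl
    simp only [usPaths, Finset.mem_singleton] at hl
    exact ⟨[], by simp [hl]⟩
  | succ N ih =>
    intro x l hl
    simp only [usPaths, Finset.mem_union, Finset.mem_image] at hl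
    rcases hl with ⟨p, hp, rfl⟩ | ⟨p, hp, rfl⟩
    · obtain ⟨t, rfl, hlen⟩ := ih _ _ hp
      exact ⟨_, rfl, by simp [List.length_cons] at hlen ⊢; omega⟩
    · obtain ⟨t, rfl, hlen⟩ := ih _ _ hp
      exact ⟨_, rfl, by simp [List.length_cons] at hlen ⊢; omega⟩

lemma usWt_cons {x y : ℕ} {N : ℕ} {p : List ℕ} (hp : p ∈ usPaths y N) :
    usWt (x :: p) = uniformSelP x y * usWt p := by
  obtain ⟨t, rfl, -⟩ := usPaths_shape N y p hp
  rfl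

lemma usPaths_disj (x N : ℕ) :
    Disjoint ((usPaths (x-1) N).image (List.cons x)) ((usPaths (x+1) N).image (List.cons x)) := by
  rw [Finset.disjoint_left]
  rintro l hl hr
  simp only [Finset.mem_image] at hl hr
  obtain ⟨p, hp, rfl⟩ := hl
  obtain ⟨q, hq, he⟩ := hr
  obtain ⟨t, rfl, -⟩ := usPaths_shape N _ p hp
  obtain ⟨s, rfl, -⟩ := usPaths_shape N _ q hq
  have : x + 1 = x - 1 := by
    have := (List.cons_eq_cons.mp he).2
    exact (List.cons_eq_cons.mp this).1
  omega

lemma usPaths_sum_aux (N x : ℕ) (g : List ℕ → ℝ) :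
    ∑ l ∈ usPaths x (N+1), g l
      = ∑ p ∈ usPaths (x-1) N, g (x :: p) + ∑ p ∈ usPaths (x+1) N, g (x :: p) := by
  have hinj : Function.Injective (List.cons x) := fun a b h => by injection h
  rw [show usPaths x (N+1)
      = ((usPaths (x-1) N).image (List.cons x)) ∪ ((usPaths (x+1) N).image (List.cons x)) from rfl,
    Finset.sum_union (usPaths_disj x N), Finset.sum_image (fun a _ b _ h => hinj h),
    Finset.sum_image (fun a _ b _ h => hinj h)]

lemma usPaths_total : ∀ N x, ∑ l ∈ usPaths x N, usWt l = 1 := by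
  intro N
  induction N with
  | zero => intro x; simp [usPaths, usWt]
  | succ N ih =>
    intro x
    rw [usPaths_sum_aux N x usWt]
    rw [Finset.sum_congr rfl (fun p hp => usWt_cons hp),
      Finset.sum_congr rfl (fun p hp => usWt_cons (x := x) hp)]
    rw [← Finset.mul_sum, ← Finset.mul_sum, ih, ih, mul_one, mul_one, usP_row]

lemma usPaths_hit : ∀ N x, ∑ l ∈ usPaths x N, (if 4 ∈ l then usWt l else 0) = usF N x := by
  intro N
  induction N with
  | zero =>
    intro x
    simp only [usPaths, Finset.sum_singleton, usF, List.mem_singleton]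
    by_cases h : x = 4 <;> simp [h, usWt, eq_comm]
  | succ N ih =>
    intro x
    rw [usPaths_sum_aux N x _]
    by_cases h4 : x = 4
    · subst h4
      have h1 : ∀ (p : List ℕ), (if 4 ∈ 4 :: p then usWt (4 :: p) else 0) = usWt (4 :: p) := by
        intro p; rw [if_pos List.mem_cons_self]
      rw [Finset.sum_congr rfl (fun p _ => h1 p), Finset.sum_congr rfl (fun p _ => h1 p),
        Finset.sum_congr rfl (fun p hp => usWt_cons hp),
        Finset.sum_congr rfl (fun p hp => usWt_cons (x := 4) hp),
        ← Finset.mul_sum, ← Finset.mul_sum, usPaths_total, usPaths_total,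
        mul_one, mul_one, usP_row, usF_four]
    · have h1 : ∀ y (p : List ℕ), p ∈ usPaths y N →
          (if 4 ∈ x :: p then usWt (x :: p) else 0)
            = uniformSelP x y * (if 4 ∈ p then usWt p else 0) := by
        intro y p hp
        have hm : (4 ∈ x :: p) ↔ (4 ∈ p) := by
          simp only [List.mem_cons]
          constructor
          · rintro (h | h); · omega
            · exact h
          · exact Or.inr
        rw [usWt_cons hp]
        by_cases hin : 4 ∈ p
        · rw [if_pos (hm.mpr hin), if_pos hin]
        · rw [if_neg (fun hc => hin (hm.mp hc)), if_neg hin, mul_zero]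
      rw [Finset.sum_congr rfl (fun p hp => h1 _ p hp),
        Finset.sum_congr rfl (fun p hp => h1 _ p hp),
        ← Finset.mul_sum, ← Finset.mul_sum, ih, ih]
      simp only [usF]
      rw [if_neg h4]

lemma usPaths_mem : ∀ N x (l : List ℕ), l.length = N + 1 → l.getD 0 0 = x →
    (∀ i < N, uniformSelP (l.getD i 0) (l.getD (i+1) 0) ≠ 0) → l ∈ usPaths x N := by
  intro N
  induction N with
  | zero =>
    intro x l hlen h0 _
    match l, hlen with
    | [a], _ =>
      have : a = x := by simpa using h0
      simp [usPaths, this]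
  | succ N ih =>
    intro x l hlen h0 hstep
    match l, hlen with
    | a :: b :: t', hlen =>
      have ha : a = x := by simpa using h0
      subst ha
      have hstep0 := hstep 0 (by omega)
      have hb : b = a - 1 ∨ b = a + 1 := usP_ne_zero (by simpa using hstep0)
      have htmem : (b :: t') ∈ usPaths b N := by
        apply ih b
        · simpa using hlen
        · simp
        · intro i hi
          have := hstep (i+1) (by omega)
          simpa using this
      simp only [usPaths, Finset.mem_union, Finset.mem_image]
      rcases hb with h | h
      · exact Or.inl ⟨b :: t', by rw [← h]; exact htmem, rfl⟩
      · exact Or.inr ⟨b :: t', by rw [← h]; exact htmem, rfl⟩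

lemma usWt_prod : ∀ N (l : List ℕ), l.length = N + 1 →
    usWt l = ∏ i ∈ Finset.range N, uniformSelP (l.getD i 0) (l.getD (i+1) 0) := by
  intro N
  induction N with
  | zero =>
    intro l hlen
    match l, hlen with
    | [a], _ => simp [usWt]
  | succ N ih =>
    intro l hlen
    match l, hlen with
    | a :: b :: t', hlen =>
      have h1 : usWt (a :: b :: t') = uniformSelP a b * usWt (b :: t') := rfl
      rw [h1, ih (b :: t') (by simpa using hlen), Finset.prod_range_succ']
      simp only [List.getD_cons_succ, List.getD_cons_zero]
      ring

lemma usPaths_nonhit (N x : ℕ) :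
    ∑ l ∈ usPaths x N, (if 4 ∈ l then 0 else usWt l) = 1 - usF N x := by
  have h : ∀ l : List ℕ, (if 4 ∈ l then (0:ℝ) else usWt l)
      = usWt l - (if 4 ∈ l then usWt l else 0) := by
    intro l; split_ifs <;> ring
  rw [Finset.sum_congr rfl (fun l _ => h l), Finset.sum_sub_distrib, usPaths_total,
    usPaths_hit]

lemma usKey {Ω : Type*} [MeasurableSpace Ω] (Pr : Measure Ω) [IsProbabilityMeasure Pr]
    (x0 : ℕ) (X : ℕ → Ω → ℕ) (hX : IsMarkovChainFrom Pr uniformSelP x0 X) (N : ℕ) :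
    Pr {ω | ∃ n ≤ N, X n ω = 4} = ENNReal.ofReal (usF N x0) := by
  classical
  set E : List ℕ → Set Ω := fun l => {ω | ∀ i ≤ N, X i ω = l.getD i 0} with hE
  have hEq : ∀ l : List ℕ, Pr (E l) = ENNReal.ofReal
      ((if l.getD 0 0 = x0 then (1:ℝ) else 0)
        * ∏ i ∈ Finset.range N, uniformSelP (l.getD i 0) (l.getD (i+1) 0)) := by
    intro l
    rw [← hX N (fun i => l.getD i 0)]
    exact (ENNReal.ofReal_toReal (measure_ne_top Pr _)).symm
  have hgood : ∀ l ∈ usPaths x0 N, Pr (E l) = ENNReal.ofReal (usWt l) := by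
    intro l hl
    obtain ⟨t, rfl, hlen⟩ := usPaths_shape N x0 _ hl
    rw [hEq]
    congr 1
    rw [if_pos (by simp), one_mul, ← usWt_prod N _ hlen]
  have hbad : ∀ l : List ℕ, l.length = N + 1 → l ∉ usPaths x0 N → Pr (E l) = 0 := by
    intro l hlen hnm
    rw [hEq]
    by_cases h0 : l.getD 0 0 = x0
    · by_cases hall : ∀ i < N, uniformSelP (l.getD i 0) (l.getD (i+1) 0) ≠ 0
      · exact absurd (usPaths_mem N x0 l hlen h0 hall) hnm
      · push_neg at hall
        obtain ⟨i, hi, hzero⟩ := hall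
        rw [if_pos h0, one_mul, Finset.prod_eq_zero (Finset.mem_range.mpr hi) hzero]
        simp
    · rw [if_neg h0, zero_mul]; simp
  set can : Ω → List ℕ := fun ω => (List.range (N+1)).map (fun i => X i ω) with hcan
  have hcanlen : ∀ ω, (can ω).length = N + 1 := by simp [hcan]
  have hcanget : ∀ ω, ∀ i ≤ N, (can ω).getD i 0 = X i ω := by
    intro ω i hi
    rw [hcan]
    rw [List.getD_eq_getElem?_getD, List.getElem?_map, List.getElem?_range (by omega)]
    rfl
  have hmemcan : ∀ ω, ω ∈ E (can ω) := fun ω i hi => (hcanget ω i hi).symm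
  have hA4 : ∀ ω, (∃ n ≤ N, X n ω = 4) → 4 ∈ can ω := by
    rintro ω ⟨n, hn, h4⟩
    rw [hcan]
    exact List.mem_map.mpr ⟨n, List.mem_range.mpr (by omega), h4⟩
  have hA4' : ∀ ω, 4 ∈ can ω → (∃ n ≤ N, X n ω = 4) := by
    intro ω h
    rw [hcan] at h
    obtain ⟨n, hn, h4⟩ := List.mem_map.mp h
    exact ⟨n, by have := List.mem_range.mp hn; omega, h4⟩
  set Bad : Set (List ℕ) := {l | l.length = N + 1 ∧ l ∉ usPaths x0 N} with hBad
  have hBadnull : Pr (⋃ l ∈ Bad, E l) = 0 := by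
    refine (measure_biUnion_null_iff (Set.to_countable Bad)).mpr ?_
    intro l hl
    exact hbad l hl.1 hl.2
  set hitF : Finset (List ℕ) := (usPaths x0 N).filter (fun l => 4 ∈ l) with hhitF
  set nonF : Finset (List ℕ) := (usPaths x0 N).filter (fun l => ¬ (4 ∈ l)) with hnonF
  have hup : Pr {ω | ∃ n ≤ N, X n ω = 4} ≤ ENNReal.ofReal (usF N x0) := by
    have hsub : {ω | ∃ n ≤ N, X n ω = 4}
        ⊆ (⋃ l ∈ (hitF : Set (List ℕ)), E l) ∪ (⋃ l ∈ Bad, E l) := by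
      intro ω hω
      by_cases hc : can ω ∈ usPaths x0 N
      · exact Or.inl (Set.mem_biUnion
          (Finset.mem_coe.mpr (Finset.mem_filter.mpr ⟨hc, hA4 ω hω⟩)) (hmemcan ω))
      · exact Or.inr (Set.mem_biUnion (show can ω ∈ Bad from ⟨hcanlen ω, hc⟩) (hmemcan ω))
    calc Pr {ω | ∃ n ≤ N, X n ω = 4}
        ≤ Pr (⋃ l ∈ (hitF : Set (List ℕ)), E l) + Pr (⋃ l ∈ Bad, E l) :=
          (measure_mono hsub).trans (measure_union_le _ _)
      _ = Pr (⋃ l ∈ (hitF : Set (List ℕ)), E l) := by rw [hBadnull, add_zero]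
      _ ≤ ∑ l ∈ hitF, Pr (E l) := measure_biUnion_finset_le _ _
      _ = ∑ l ∈ hitF, ENNReal.ofReal (usWt l) :=
          Finset.sum_congr rfl (fun l hl => hgood l (Finset.filter_subset _ _ hl))
      _ = ENNReal.ofReal (∑ l ∈ hitF, usWt l) :=
          (ENNReal.ofReal_sum_of_nonneg (fun l _ => usWt_nonneg l)).symm
      _ = ENNReal.ofReal (usF N x0) := by
          rw [hhitF, Finset.sum_filter, usPaths_hit]
  have hlow : ENNReal.ofReal (usF N x0) ≤ Pr {ω | ∃ n ≤ N, X n ω = 4} := by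
    have hsub : (Set.univ : Set Ω) ⊆ {ω | ∃ n ≤ N, X n ω = 4}
        ∪ ((⋃ l ∈ (nonF : Set (List ℕ)), E l) ∪ (⋃ l ∈ Bad, E l)) := by
      intro ω _
      by_cases hω : ∃ n ≤ N, X n ω = 4
      · exact Or.inl hω
      · refine Or.inr ?_
        by_cases hc : can ω ∈ usPaths x0 N
        · exact Or.inl (Set.mem_biUnion
            (Finset.mem_coe.mpr (Finset.mem_filter.mpr ⟨hc, fun h => hω (hA4' ω h)⟩))
            (hmemcan ω))
        · exact Or.inr (Set.mem_biUnion (show can ω ∈ Bad from ⟨hcanlen ω, hc⟩) (hmemcan ω))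
    have h1 : (1:ℝ≥0∞) ≤ Pr {ω | ∃ n ≤ N, X n ω = 4} + ENNReal.ofReal (1 - usF N x0) := by
      calc (1:ℝ≥0∞) = Pr Set.univ := measure_univ.symm
        _ ≤ Pr {ω | ∃ n ≤ N, X n ω = 4}
            + Pr ((⋃ l ∈ (nonF : Set (List ℕ)), E l) ∪ (⋃ l ∈ Bad, E l)) :=
          (measure_mono hsub).trans (measure_union_le _ _)
        _ ≤ Pr {ω | ∃ n ≤ N, X n ω = 4}
            + (Pr (⋃ l ∈ (nonF : Set (List ℕ)), E l) + Pr (⋃ l ∈ Bad, E l)) :=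
          add_le_add le_rfl (measure_union_le _ _)
        _ = Pr {ω | ∃ n ≤ N, X n ω = 4} + Pr (⋃ l ∈ (nonF : Set (List ℕ)), E l) := by
          rw [hBadnull, add_zero]
        _ ≤ Pr {ω | ∃ n ≤ N, X n ω = 4} + ∑ l ∈ nonF, Pr (E l) :=
          add_le_add le_rfl (measure_biUnion_finset_le _ _)
        _ = Pr {ω | ∃ n ≤ N, X n ω = 4} + ENNReal.ofReal (1 - usF N x0) := by
          congr 1
          rw [Finset.sum_congr rfl (fun l hl => hgood l (Finset.filter_subset _ _ hl)),
            ← ENNReal.ofReal_sum_of_nonneg (fun l _ => usWt_nonneg l)]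
          congr 1
          rw [Finset.sum_filter, ← usPaths_nonhit N x0]
          refine Finset.sum_congr rfl (fun l _ => ?_)
          split_ifs <;> simp_all
    have hF1 : usF N x0 ≤ 1 := usF_le_one N x0
    have e : usF N x0 = 1 - (1 - usF N x0) := by ring
    rw [e, ENNReal.ofReal_sub _ (by linarith [usF_nonneg N x0]), ENNReal.ofReal_one]
    exact tsub_le_iff_right.mpr h1
  exact le_antisymm hup hlow

/-- Corollary appendixcor: for the Example 2 Uniform Selection
chain started at `4a` with `a ≥ 2`, the probability of ever reaching state 4
equals `(8/9)^(a-1)`, which is strictly less than 1. -/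
theorem uniformSel_reach_four_probability
    {Ω : Type*} [MeasurableSpace Ω]
    (Pr : Measure Ω) [IsProbabilityMeasure Pr]
    (a : ℕ) (ha : 2 ≤ a)
    (X : ℕ → Ω → ℕ)
    (hX : IsMarkovChainFrom Pr uniformSelP (4 * a) X) :
    (Pr {ω | ∃ n : ℕ, X n ω = 4}).toReal = (8 / 9 : ℝ) ^ (a - 1) ∧
      ((8 / 9 : ℝ) ^ (a - 1) < 1) := by
  constructor
  · have hsets : {ω : Ω | ∃ n : ℕ, X n ω = 4} = ⋃ N, {ω | ∃ n ≤ N, X n ω = 4} := by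
      ext ω
      simp only [Set.mem_setOf_eq, Set.mem_iUnion]
      constructor
      · rintro ⟨n, hn⟩; exact ⟨n, n, le_refl n, hn⟩
      · rintro ⟨N, n, _, hn⟩; exact ⟨n, hn⟩
    have hmono : Monotone (fun N => {ω : Ω | ∃ n ≤ N, X n ω = 4}) := by
      rintro i j hij ω ⟨n, hn, h⟩
      exact ⟨n, hn.trans hij, h⟩
    rw [hsets, hmono.measure_iUnion]
    rw [iSup_congr (fun N => usKey Pr (4*a) X hX N)]
    rw [ENNReal.toReal_iSup (fun N => ENNReal.ofReal_ne_top)]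
    have h2 : (⨆ N, (ENNReal.ofReal (usF N (4*a))).toReal) = ⨆ N, usF N (4*a) :=
      iSup_congr (fun N => ENNReal.toReal_ofReal (usF_nonneg _ _))
    rw [h2]
    have h89 : (8/9 : ℝ) = 8/9 := rfl
    rw [usF_iSup ha]
  · exact usF_lt_one_pow ha
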